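/- arXiv:1311.4643 — 7 statements merged into one kernel-verified Lean document; each statement's English description precedes it below -/
import Mathlib

section
/- For every m×n real matrix A and every sampling distribution p on the entries of A, σ̃(p)² ≥ ∑_{i=1}^m ‖A_(i)‖₁². -/
open Finset

/-- Weighted Cauchy–Schwarz. Entries with `f i = 0` may have weight `g i = 0`: their term
`0 / 0` is Lean's junk value `0`, which is exactly what the inequality needs. -/
theorem Finset.sq_sum_abs_le_sum_mul_sum_sq_div {ι : Type*} (s : Finset ι) (f g : ι → ℝ)
    (hg : ∀ i ∈ s, 0 ≤ g i) (hfg : ∀ i ∈ s, f i ≠ 0 → 0 < g i) :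
    (∑ i ∈ s, |f i|) ^ 2 ≤ (∑ i ∈ s, g i) * ∑ i ∈ s, f i ^ 2 / g i := by
  refine sum_sq_le_sum_mul_sum_of_sq_le_mul s hg (fun i hi => div_nonneg (sq_nonneg _) (hg i hi))
    fun i hi => ?_
  rcases eq_or_ne (f i) 0 with hf | hf
  · simp [hf]
  · rw [sq_abs, mul_div_cancel₀ _ (hfg i hi hf).ne']

theorem Finset.sum_mul_le_iSup_of_sum_eq_one {ι : Type*} [Fintype ι] (w x : ι → ℝ)
    (hw : ∀ i, 0 ≤ w i) (hsum : ∑ i, w i = 1) : ∑ i, w i * x i ≤ ⨆ i, x i :=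
  calc ∑ i, w i * x i
      ≤ ∑ i, w i * ⨆ i, x i := sum_le_sum fun i _ =>
        mul_le_mul_of_nonneg_left (le_ciSup (Set.finite_range x).bddAbove i) (hw i)
    _ = ⨆ i, x i := by rw [← sum_mul, hsum, one_mul]

theorem stmt2_general (m n : ℕ)
    (A : Matrix (Fin m) (Fin n) ℝ) (p : Fin m → Fin n → ℝ)
    (hp0 : ∀ i j, 0 ≤ p i j) (hpsum : ∑ i, ∑ j, p i j = 1)
    (hppos : ∀ i j, A i j ≠ 0 → 0 < p i j) :
    ∑ i, (∑ j, |A i j|) ^ 2 ≤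
      max (⨆ i, ∑ j, A i j ^ 2 / p i j) (⨆ j, ∑ i, A i j ^ 2 / p i j) :=
  calc ∑ i, (∑ j, |A i j|) ^ 2
      ≤ ∑ i, (∑ j, p i j) * ∑ j, A i j ^ 2 / p i j := sum_le_sum fun i _ =>
        univ.sq_sum_abs_le_sum_mul_sum_sq_div _ _ (fun j _ => hp0 i j) fun j _ => hppos i j
    _ ≤ ⨆ i, ∑ j, A i j ^ 2 / p i j :=
        sum_mul_le_iSup_of_sum_eq_one _ _ (fun i => sum_nonneg fun j _ => hp0 i j) hpsum
    _ ≤ _ := le_max_left _ _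

/-- For every `m×n` real matrix `A` and every sampling distribution `p` on its entries,
`σ̃(p)² ≥ ∑_i ‖A_(i)‖₁²`. -/
theorem stmt2 (m n : ℕ) (hm : 0 < m) (hn : 0 < n)
    (A : Matrix (Fin m) (Fin n) ℝ) (p : Fin m → Fin n → ℝ)
    (hp0 : ∀ i j, 0 ≤ p i j) (hpsum : ∑ i, ∑ j, p i j = 1)
    (hppos : ∀ i j, A i j ≠ 0 → 0 < p i j) :
    ∑ i, (∑ j, |A i j|) ^ 2 ≤
      max (⨆ i, ∑ j, A i j ^ 2 / p i j) (⨆ j, ∑ i, A i j ^ 2 / p i j) :=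
  stmt2_general m n A p hp0 hpsum hppos
end

section
/- Let A be a nonzero m×n real matrix and p any sampling distribution on the entries of A. Then |R(p)/R̃(p) − 1| ≤ ‖A‖₂ / ‖A‖₁. -/
open Matrix

/-- The spectral norm (ℓ2→ℓ2 operator norm) of a rectangular real matrix. -/
noncomputable def specNorm {m n : ℕ} (A : Matrix (Fin m) (Fin n) ℝ) : ℝ :=
  ‖(Matrix.toEuclideanLin A).toContinuousLinearMap‖

/-- `R̃(p) = max_{i,j} |A i j| / p i j`. -/
noncomputable def RTilde {m n : ℕ} (A : Matrix (Fin m) (Fin n) ℝ)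
    (p : Fin m → Fin n → ℝ) : ℝ :=
  ⨆ i, ⨆ j, |A i j| / p i j

/-- `R(p)`: the maximum over pairs `(i,j)` with `p i j > 0` of `‖A − B^(i,j)‖₂`, where
`B^(i,j)` has `(i,j)` entry `A i j / p i j` and all other entries `0`. -/
noncomputable def Rp {m n : ℕ} (A : Matrix (Fin m) (Fin n) ℝ)
    (p : Fin m → Fin n → ℝ) : ℝ :=
  sSup {x : ℝ | ∃ i j, 0 < p i j ∧
    x = specNorm (A - Matrix.single i j (A i j / p i j))}

/-!
The single-entry matrix `B^(i,j)` has spectral norm `|A i j| / p i j`, so by the triangle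
inequality `‖A − B^(i,j)‖₂` is within `‖A‖₂` of `|A i j| / p i j`. Taking maxima over the entries,
`|R(p) − R̃(p)| ≤ ‖A‖₂`. On the other hand `‖A‖₁ = ∑ p i j · |A i j| / p i j ≤ R̃(p)` because `p`
is a probability distribution; dividing the first bound by `R̃(p)` gives the claim.
-/

open scoped Matrix.Norms.L2Operator

namespace Matrix

lemma l2_opNorm_single {m n : Type*} [Fintype m] [Fintype n] [DecidableEq m] [DecidableEq n]
    (i : m) (j : n) (c : ℝ) : ‖(single i j c : Matrix m n ℝ)‖ = |c| := by
  have hmulVec : ∀ x : EuclideanSpace ℝ n,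
      (EuclideanSpace.equiv m ℝ).symm (single i j c *ᵥ x) =
        EuclideanSpace.single i (c * x j) := by
    intro x
    rw [single_mulVec]
    rfl
  refine le_antisymm ?_ ?_
  · refine ContinuousLinearMap.opNorm_le_bound _ (abs_nonneg c) fun x => ?_
    change ‖(EuclideanSpace.equiv m ℝ).symm (single i j c *ᵥ x)‖ ≤ _
    rw [hmulVec, PiLp.norm_single, norm_mul, Real.norm_eq_abs]
    exact mul_le_mul_of_nonneg_left (PiLp.norm_apply_le x j) (abs_nonneg c)
  · have h := l2_opNorm_mulVec (single i j c) (EuclideanSpace.single j 1)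
    rw [hmulVec] at h
    simpa using h

lemma exists_apply_ne_zero {m n α : Type*} [Zero α] {A : Matrix m n α} (hA : A ≠ 0) :
    ∃ i j, A i j ≠ 0 := by
  by_contra! h
  exact hA (ext h)

end Matrix

lemma specNorm_eq_l2_opNorm {m n : ℕ} (A : Matrix (Fin m) (Fin n) ℝ) : specNorm A = ‖A‖ := rfl

lemma sum_abs_pos {m n : ℕ} {A : Matrix (Fin m) (Fin n) ℝ} (hA : A ≠ 0) :
    0 < ∑ i, ∑ j, |A i j| := by
  obtain ⟨i, j, hij⟩ := exists_apply_ne_zero hA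
  refine Finset.sum_pos' (fun i _ => Finset.sum_nonneg fun j _ => abs_nonneg _) ⟨i, by simp, ?_⟩
  exact Finset.sum_pos' (fun j _ => abs_nonneg _) ⟨j, by simp, abs_pos.mpr hij⟩

section

variable {m n : ℕ} (A : Matrix (Fin m) (Fin n) ℝ) (p : Fin m → Fin n → ℝ)

lemma abs_specNorm_sub_single_sub_le {i : Fin m} {j : Fin n} (hp : 0 ≤ p i j) :
    |specNorm (A - single i j (A i j / p i j)) - |A i j| / p i j| ≤ specNorm A := by
  set B := single i j (A i j / p i j)
  have hB : ‖B‖ = |A i j| / p i j := by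
    rw [l2_opNorm_single, abs_div, abs_of_nonneg hp]
  rw [specNorm_eq_l2_opNorm, specNorm_eq_l2_opNorm, ← hB, norm_sub_rev, abs_sub_comm]
  simpa using abs_norm_sub_norm_le B (B - A)

lemma le_RTilde (i : Fin m) (j : Fin n) : |A i j| / p i j ≤ RTilde A p :=
  (le_ciSup (Set.finite_range _).bddAbove j).trans
    (le_ciSup (f := fun i => ⨆ j, |A i j| / p i j) (Set.finite_range _).bddAbove i)

lemma exists_eq_RTilde [Nonempty (Fin m)] [Nonempty (Fin n)] :
    ∃ i j, |A i j| / p i j = RTilde A p := by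
  obtain ⟨i, hi⟩ := exists_eq_ciSup_of_finite (f := fun i => ⨆ j, |A i j| / p i j)
  obtain ⟨j, hj⟩ := exists_eq_ciSup_of_finite (f := fun j => |A i j| / p i j)
  exact ⟨i, j, hj.trans hi⟩

lemma le_Rp {i : Fin m} {j : Fin n} (hp : 0 < p i j) :
    specNorm (A - single i j (A i j / p i j)) ≤ Rp A p := by
  refine le_csSup ?_ ⟨i, j, hp, rfl⟩
  refine ((Set.finite_range fun q : Fin m × Fin n =>
    specNorm (A - single q.1 q.2 (A q.1 q.2 / p q.1 q.2))).subset ?_).bddAbove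
  rintro x ⟨i, j, -, rfl⟩
  exact ⟨(i, j), rfl⟩

lemma Rp_le {c : ℝ} (hne : ∃ i j, 0 < p i j)
    (h : ∀ i j, 0 < p i j → specNorm (A - single i j (A i j / p i j)) ≤ c) : Rp A p ≤ c := by
  obtain ⟨i, j, hp⟩ := hne
  refine csSup_le ⟨_, i, j, hp, rfl⟩ ?_
  rintro x ⟨i, j, hp, rfl⟩
  exact h i j hp

lemma abs_Rp_sub_RTilde_le (hA : A ≠ 0) (hp0 : ∀ i j, 0 ≤ p i j)
    (hppos : ∀ i j, A i j ≠ 0 → 0 < p i j) : |Rp A p - RTilde A p| ≤ specNorm A := by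
  obtain ⟨i₁, j₁, hA₁⟩ := exists_apply_ne_zero hA
  have : Nonempty (Fin m) := ⟨i₁⟩
  have : Nonempty (Fin n) := ⟨j₁⟩
  obtain ⟨i₀, j₀, hmax⟩ := exists_eq_RTilde A p
  have hp₀ : 0 < p i₀ j₀ := by
    have hpos : 0 < |A i₀ j₀| / p i₀ j₀ :=
      hmax ▸ (div_pos (abs_pos.mpr hA₁) (hppos _ _ hA₁)).trans_le (le_RTilde A p i₁ j₁)
    refine (hp0 i₀ j₀).lt_of_ne fun h => ?_
    simp [← h] at hpos
  rw [abs_sub_le_iff]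
  constructor
  · refine sub_left_le_of_le_add (Rp_le A p ⟨i₀, j₀, hp₀⟩ fun i j hp => ?_)
    have := (abs_le.mp (abs_specNorm_sub_single_sub_le A p hp.le)).2
    linarith [le_RTilde A p i j]
  · have := (abs_le.mp (abs_specNorm_sub_single_sub_le A p hp₀.le)).1
    linarith [le_Rp A p hp₀]

lemma sum_abs_le_RTilde (hp0 : ∀ i j, 0 ≤ p i j) (hpsum : ∑ i, ∑ j, p i j = 1)
    (hppos : ∀ i j, A i j ≠ 0 → 0 < p i j) : ∑ i, ∑ j, |A i j| ≤ RTilde A p :=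
  calc ∑ i, ∑ j, |A i j|
      = ∑ i, ∑ j, p i j * (|A i j| / p i j) := by
        refine Finset.sum_congr rfl fun i _ => Finset.sum_congr rfl fun j _ => ?_
        by_cases hA : A i j = 0
        · simp [hA]
        · rw [mul_div_cancel₀ _ (hppos i j hA).ne']
    _ ≤ ∑ i, ∑ j, p i j * RTilde A p := by
        gcongr with i _ j _
        · exact hp0 i j
        · exact le_RTilde A p i j
    _ = RTilde A p := by simp_rw [← Finset.sum_mul, hpsum, one_mul]

end

theorem stmt4_general (m n : ℕ)
    (A : Matrix (Fin m) (Fin n) ℝ) (hA : A ≠ 0) (p : Fin m → Fin n → ℝ)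
    (hp0 : ∀ i j, 0 ≤ p i j) (hpsum : ∑ i, ∑ j, p i j = 1)
    (hppos : ∀ i j, A i j ≠ 0 → 0 < p i j) :
    |Rp A p / RTilde A p - 1| ≤ specNorm A / ∑ i, ∑ j, |A i j| := by
  have hnorm₁ : 0 < ∑ i, ∑ j, |A i j| := sum_abs_pos hA
  have hRTilde : ∑ i, ∑ j, |A i j| ≤ RTilde A p := sum_abs_le_RTilde A p hp0 hpsum hppos
  have hRTilde_pos : 0 < RTilde A p := hnorm₁.trans_le hRTilde
  rw [div_sub_one hRTilde_pos.ne', abs_div, abs_of_pos hRTilde_pos]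
  exact div_le_div₀ (norm_nonneg A) (abs_Rp_sub_RTilde_le A p hA hp0 hppos) hnorm₁ hRTilde

/-- For a nonzero matrix `A` and any sampling distribution `p`,
`|R(p)/R̃(p) − 1| ≤ ‖A‖₂ / ‖A‖₁`. -/
theorem stmt4 (m n : ℕ) (hm : 0 < m) (hn : 0 < n)
    (A : Matrix (Fin m) (Fin n) ℝ) (hA : A ≠ 0) (p : Fin m → Fin n → ℝ)
    (hp0 : ∀ i j, 0 ≤ p i j) (hpsum : ∑ i, ∑ j, p i j = 1)
    (hppos : ∀ i j, A i j ≠ 0 → 0 < p i j) :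
    |Rp A p / RTilde A p - 1| ≤ specNorm A / ∑ i, ∑ j, |A i j| :=
  stmt4_general m n A hA p hp0 hpsum hppos
end

section
/- For any real numbers c > 0 and d > 0, the equation x² − c·x − d = 0 has exactly one positive real solution r and one negative real solution, and this positive solution satisfies (c + √d)/√2 ≤ r ≤ c + √d. -/
/-!
Two distinct roots of `x² - c x - d` sum to `c`, so their product is `-d < 0`: two roots of the
same sign coincide, and `(c ± √(c² + 4d))/2` provide one root of each sign. For the positive
root `r`, `r (r - c) = d > 0` gives `r > c`, hence `r² = c r + d ≥ c² + d ≥ (c + √d)²/2`, while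
`r > c + √d` would force `d = r (r - c) > (c + √d) √d ≥ d`.
-/

section Quadratic

variable {c d r s : ℝ}

lemma mul_eq_neg_of_ne_of_sq_sub_mul_sub_eq_zero (hr : r ^ 2 - c * r - d = 0)
    (hs : s ^ 2 - c * s - d = 0) (hne : r ≠ s) : r * s = -d := by
  have hsum : r + s = c := by
    have h : (r - s) * (r + s - c) = 0 := by linear_combination hr - hs
    linarith [(mul_eq_zero.mp h).resolve_left (sub_ne_zero.mpr hne)]
  linear_combination (-1 : ℝ) * hr + r * hsum

lemma eq_of_mul_pos_of_sq_sub_mul_sub_eq_zero (hd : 0 < d) (hr : r ^ 2 - c * r - d = 0)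
    (hs : s ^ 2 - c * s - d = 0) (hrs : 0 < r * s) : r = s := by
  by_contra hne
  linarith [mul_eq_neg_of_ne_of_sq_sub_mul_sub_eq_zero hr hs hne]

lemma half_add_sq_sub_mul_sub_eq_zero (hs : s ^ 2 = c ^ 2 + 4 * d) :
    ((c + s) / 2) ^ 2 - c * ((c + s) / 2) - d = 0 := by
  linear_combination hs / 4

lemma abs_lt_sqrt_sq_add_four_mul (hd : 0 < d) : |c| < √(c ^ 2 + 4 * d) :=
  abs_lt_of_sq_lt_sq (by rw [Real.sq_sqrt (by positivity)]; linarith) (Real.sqrt_nonneg _)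

lemma existsUnique_pos_sq_sub_mul_sub_eq_zero (hd : 0 < d) :
    ∃! r : ℝ, 0 < r ∧ r ^ 2 - c * r - d = 0 := by
  have hs : √(c ^ 2 + 4 * d) ^ 2 = c ^ 2 + 4 * d := Real.sq_sqrt (by positivity)
  have hpos : 0 < (c + √(c ^ 2 + 4 * d)) / 2 := by
    linarith [abs_lt.mp (abs_lt_sqrt_sq_add_four_mul (c := c) hd)]
  exact ⟨_, ⟨hpos, half_add_sq_sub_mul_sub_eq_zero hs⟩, fun r ⟨hr0, hr⟩ =>
    eq_of_mul_pos_of_sq_sub_mul_sub_eq_zero hd hr (half_add_sq_sub_mul_sub_eq_zero hs)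
      (mul_pos hr0 hpos)⟩

lemma existsUnique_neg_sq_sub_mul_sub_eq_zero (hd : 0 < d) :
    ∃! r : ℝ, r < 0 ∧ r ^ 2 - c * r - d = 0 := by
  have hs : (-√(c ^ 2 + 4 * d)) ^ 2 = c ^ 2 + 4 * d := by
    rw [neg_sq, Real.sq_sqrt (by positivity)]
  have hneg : (c + -√(c ^ 2 + 4 * d)) / 2 < 0 := by
    linarith [abs_lt.mp (abs_lt_sqrt_sq_add_four_mul (c := c) hd)]
  exact ⟨_, ⟨hneg, half_add_sq_sub_mul_sub_eq_zero hs⟩, fun r ⟨hr0, hr⟩ =>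
    eq_of_mul_pos_of_sq_sub_mul_sub_eq_zero hd hr (half_add_sq_sub_mul_sub_eq_zero hs)
      (mul_pos_of_neg_of_neg hr0 hneg)⟩

lemma lt_of_pos_of_sq_sub_mul_sub_eq_zero (hd : 0 < d) (hr0 : 0 < r)
    (hr : r ^ 2 - c * r - d = 0) : c < r := by
  nlinarith

lemma le_add_sqrt_of_pos_of_sq_sub_mul_sub_eq_zero (hc : 0 ≤ c) (hd : 0 ≤ d) (hr0 : 0 < r)
    (hr : r ^ 2 - c * r - d = 0) : r ≤ c + √d := by
  have hu : √d ^ 2 = d := Real.sq_sqrt hd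
  by_contra! h
  -- `r (r - c) - (c + √d) √d = (r - c - √d) (r + √d)`
  have hgap : 0 < (r - c - √d) * (r + √d) := by
    apply mul_pos <;> linarith [Real.sqrt_nonneg d]
  nlinarith [mul_nonneg hc (Real.sqrt_nonneg d)]

lemma add_sqrt_div_sqrt_two_le_of_pos_of_sq_sub_mul_sub_eq_zero (hc : 0 ≤ c) (hd : 0 < d)
    (hr0 : 0 < r) (hr : r ^ 2 - c * r - d = 0) : (c + √d) / √2 ≤ r := by
  have hcr := lt_of_pos_of_sq_sub_mul_sub_eq_zero hd hr0 hr
  have hsq : ((c + √d) / √2) ^ 2 ≤ r ^ 2 :=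
    calc ((c + √d) / √2) ^ 2 = (c + √d) ^ 2 / 2 := by
          rw [div_pow, Real.sq_sqrt zero_le_two]
      _ ≤ c ^ 2 + √d ^ 2 := by linarith [add_sq_le (a := c) (b := √d)]
      _ = c ^ 2 + d := by rw [Real.sq_sqrt hd.le]
      _ ≤ r ^ 2 := by nlinarith
  exact (pow_le_pow_iff_left₀ (by positivity) hr0.le two_ne_zero).mp hsq

end Quadratic

/-- For `c, d > 0`, the equation `x² − c·x − d = 0` has exactly one positive and exactly one
negative real solution, and the positive solution `r` satisfies
`(c + √d)/√2 ≤ r ≤ c + √d`. -/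
theorem stmt6 (c d : ℝ) (hc : 0 < c) (hd : 0 < d) :
    (∃! r : ℝ, 0 < r ∧ r ^ 2 - c * r - d = 0) ∧
    (∃! r : ℝ, r < 0 ∧ r ^ 2 - c * r - d = 0) ∧
    (∀ r : ℝ, 0 < r → r ^ 2 - c * r - d = 0 →
      (c + Real.sqrt d) / Real.sqrt 2 ≤ r ∧ r ≤ c + Real.sqrt d) :=
  ⟨existsUnique_pos_sq_sub_mul_sub_eq_zero hd, existsUnique_neg_sq_sub_mul_sub_eq_zero hd,
    fun _ hr0 hr => ⟨add_sqrt_div_sqrt_two_le_of_pos_of_sq_sub_mul_sub_eq_zero hc.le hd hr0 hr,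
      le_add_sqrt_of_pos_of_sq_sub_mul_sub_eq_zero hc.le hd.le hr0 hr⟩⟩
end

section
/- Let A be an m×n real matrix and p a sampling distribution on its entries with σ(p) > 0 and R(p) > 0. Then the quantity ε₁(p) = inf{ ε > 0 : (m+n)·exp(−sε²/(σ(p)² + R(p)·ε/3)) ≤ δ } satisfies ε₂(p)/√2 ≤ ε₁(p) ≤ ε₂(p), where ε₂(p) = α·σ(p) + β·R(p). -/
open Matrix

/-- `σ(p)² = max{ ‖D_r(p) − A Aᵀ‖₂, ‖D_c(p) − Aᵀ A‖₂ }`. -/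
noncomputable def sigmaSq {m n : ℕ} (A : Matrix (Fin m) (Fin n) ℝ)
    (p : Fin m → Fin n → ℝ) : ℝ :=
  max (specNorm (Matrix.diagonal (fun i => ∑ j, A i j ^ 2 / p i j) - A * Aᵀ))
      (specNorm (Matrix.diagonal (fun j => ∑ i, A i j ^ 2 / p i j) - Aᵀ * A))

/-- `α = √(log((m+n)/δ)/s)`. -/
noncomputable def alphaC (m n s : ℕ) (δ : ℝ) : ℝ :=
  Real.sqrt (Real.log ((m + n : ℝ) / δ) / s)

/-- `β = log((m+n)/δ)/(3s)`. -/
noncomputable def betaC (m n s : ℕ) (δ : ℝ) : ℝ :=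
  Real.log ((m + n : ℝ) / δ) / (3 * s)

/-- `ε₁(p) = inf{ ε > 0 : (m+n)·exp(−sε²/(σ(p)² + R(p)·ε/3)) ≤ δ }`. -/
noncomputable def eps1 {m n : ℕ} (s : ℕ) (δ : ℝ) (A : Matrix (Fin m) (Fin n) ℝ)
    (p : Fin m → Fin n → ℝ) : ℝ :=
  sInf {ε : ℝ | 0 < ε ∧
    (m + n : ℝ) * Real.exp (-(s * ε ^ 2) / (sigmaSq A p + Rp A p * ε / 3)) ≤ δ}

/-!
Taking logarithms, `(m+n)·exp(−sε²/(σ² + Rε/3)) ≤ δ` says `c + bε ≤ sε²` with `L = log((m+n)/δ)`,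
`c = Lσ²` and `b = LR/3`. For `c > 0` the positive solutions of this quadratic inequality form the
ray `[x, ∞)` starting at the positive root `x` of `sx² = bx + c`, so `ε₁ = x`. With
`e = √(c/s) = α√σ²` and `B = b/s = βR`, one has `s(e + B)² − b(e + B) − c = eb ≥ 0`, whence `x ≤ e + B`,
and `e² + B² ≤ x²` because `b ≤ sx`, whence `(e + B)² ≤ 2(e² + B²) ≤ 2x²`.
-/

theorem exists_pos_root_of_quadratic {a b c : ℝ} (ha : 0 < a) (hc : 0 < c) :
    ∃ x, 0 < x ∧ a * x ^ 2 = b * x + c := by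
  set t := √(b ^ 2 + 4 * a * c)
  have ht : t ^ 2 = b ^ 2 + 4 * a * c := Real.sq_sqrt (by positivity)
  have hbt : |b| < t := by
    rw [← Real.sqrt_sq_eq_abs]
    exact Real.sqrt_lt_sqrt (sq_nonneg b) (by nlinarith [mul_pos ha hc])
  refine ⟨(b + t) / (2 * a), ?_, ?_⟩
  · have : 0 < b + t := by linarith [neg_abs_le b]
    positivity
  · field_simp
    linear_combination ht

section QuadraticRoot

variable {a b c x : ℝ}

theorem lt_mul_of_quadratic_root (hc : 0 < c) (hx : 0 < x) (hroot : a * x ^ 2 = b * x + c) :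
    b < a * x := by
  nlinarith

variable (ha : 0 < a) (hc : 0 < c) (hx : 0 < x) (hroot : a * x ^ 2 = b * x + c)
include ha hc hx hroot

theorem quadratic_le_iff_root_le {ε : ℝ} (hε : 0 < ε) : c + b * ε ≤ a * ε ^ 2 ↔ x ≤ ε := by
  have hbx := lt_mul_of_quadratic_root hc hx hroot
  have hfac : a * ε ^ 2 - (c + b * ε) = (ε - x) * (a * ε + a * x - b) := by
    linear_combination hroot
  have hpos : 0 < a * ε + a * x - b := by nlinarith [mul_pos ha hε]
  rw [← sub_nonneg, hfac, mul_nonneg_iff_of_pos_right hpos, sub_nonneg]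

theorem setOf_quadratic_le_eq_Ici : {ε : ℝ | 0 < ε ∧ c + b * ε ≤ a * ε ^ 2} = Set.Ici x := by
  ext ε
  constructor
  · rintro ⟨hε, hle⟩
    exact (quadratic_le_iff_root_le ha hc hx hroot hε).1 hle
  · intro (hxε : x ≤ ε)
    have hε := hx.trans_le hxε
    exact ⟨hε, (quadratic_le_iff_root_le ha hc hx hroot hε).2 hxε⟩

theorem quadratic_root_le_sqrt_add (hb : 0 ≤ b) : x ≤ √(c / a) + b / a := by
  have he : a * √(c / a) ^ 2 = c := by
    rw [Real.sq_sqrt (by positivity)]; field_simp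
  have hsum : 0 < √(c / a) + b / a := by positivity
  refine (quadratic_le_iff_root_le ha hc hx hroot hsum).1 ?_
  have hb' : a * (b / a) = b := by field_simp
  have hgap : a * (√(c / a) + b / a) ^ 2 = c + b * (√(c / a) + b / a) + b * √(c / a) := by
    linear_combination he + (2 * √(c / a) + b / a) * hb'
  linarith [mul_nonneg hb (Real.sqrt_nonneg (c / a))]

theorem sqrt_add_div_sqrt_two_le_quadratic_root (hb : 0 ≤ b) :
    (√(c / a) + b / a) / √2 ≤ x := by
  have hbx := lt_mul_of_quadratic_root hc hx hroot
  have he : √(c / a) ^ 2 = c / a := Real.sq_sqrt (by positivity)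
  have hsq : √(c / a) ^ 2 + (b / a) ^ 2 ≤ x ^ 2 := by
    have hgap : x ^ 2 - (c / a + (b / a) ^ 2) = b * (a * x - b) / a ^ 2 := by
      field_simp
      linear_combination a * hroot
    have : 0 ≤ b * (a * x - b) / a ^ 2 := by
      have := (sub_pos.2 hbx).le
      positivity
    rw [he]
    linarith
  have hsum : (√(c / a) + b / a) ^ 2 ≤ (x * √2) ^ 2 := by
    rw [mul_pow, Real.sq_sqrt zero_le_two]
    nlinarith [sq_nonneg (√(c / a) - b / a)]
  rw [div_le_iff₀ (by positivity)]
  exact (pow_le_pow_iff_left₀ (by positivity) (by positivity) two_ne_zero).1 hsum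

end QuadraticRoot

theorem mul_exp_neg_div_le_iff {N δ D q : ℝ} (hN : 0 < N) (hδ : 0 < δ) (hD : 0 < D) :
    N * Real.exp (-q / D) ≤ δ ↔ Real.log (N / δ) * D ≤ q := by
  rw [← le_div_iff₀' hN, ← Real.le_log_iff_exp_le (by positivity), neg_div,
    Real.log_div hδ.ne' hN.ne', Real.log_div hN.ne' hδ.ne', ← le_div_iff₀ hD]
  constructor <;> intro h <;> linarith

theorem stmt7_general (m n : ℕ) (hm : 0 < m)
    (A : Matrix (Fin m) (Fin n) ℝ)
    (s : ℕ) (hs : 1 ≤ s) (δ : ℝ) (hδ : δ ∈ Set.Ioo (0 : ℝ) 1)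
    (p : Fin m → Fin n → ℝ)
    (hσ : 0 < sigmaSq A p) (hR : 0 < Rp A p) :
    (alphaC m n s δ * Real.sqrt (sigmaSq A p) + betaC m n s δ * Rp A p) / Real.sqrt 2
        ≤ eps1 s δ A p ∧
      eps1 s δ A p ≤ alphaC m n s δ * Real.sqrt (sigmaSq A p) + betaC m n s δ * Rp A p := by
  obtain ⟨hδ0, hδ1⟩ := hδ
  have hmn : (1 : ℝ) ≤ m + n := by
    have : (1 : ℝ) ≤ m := by exact_mod_cast hm
    linarith [Nat.cast_nonneg (α := ℝ) n]
  have hs0 : (0 : ℝ) < s := by exact_mod_cast hs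
  set L := Real.log ((m + n : ℝ) / δ)
  have hL : 0 < L := Real.log_pos ((one_lt_div hδ0).2 (by linarith))
  obtain ⟨x, hx, hroot⟩ := exists_pos_root_of_quadratic (b := L * Rp A p / 3) hs0 (mul_pos hL hσ)
  have hthreshold : {ε : ℝ | 0 < ε ∧ (m + n : ℝ) *
      Real.exp (-(s * ε ^ 2) / (sigmaSq A p + Rp A p * ε / 3)) ≤ δ} = Set.Ici x := by
    rw [← setOf_quadratic_le_eq_Ici hs0 (mul_pos hL hσ) hx hroot]
    refine Set.ext fun ε => and_congr_right fun hε => ?_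
    rw [mul_exp_neg_div_le_iff (by linarith) hδ0 (by positivity)]
    constructor <;> intro h <;> linarith
  have heps2 : alphaC m n s δ * √(sigmaSq A p) + betaC m n s δ * Rp A p
      = √(L * sigmaSq A p / s) + L * Rp A p / 3 / s := by
    rw [alphaC, betaC, ← Real.sqrt_mul (by positivity), div_mul_eq_mul_div, div_div,
      div_mul_eq_mul_div, mul_comm (3 : ℝ)]
  rw [eps1, hthreshold, csInf_Ici, heps2]
  exact ⟨sqrt_add_div_sqrt_two_le_quadratic_root hs0 (mul_pos hL hσ) hx hroot (by positivity),
    quadratic_root_le_sqrt_add hs0 (mul_pos hL hσ) hx hroot (by positivity)⟩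

/-- For a sampling distribution `p` with `σ(p) > 0` and `R(p) > 0`,
`ε₂(p)/√2 ≤ ε₁(p) ≤ ε₂(p)` where `ε₂(p) = α·σ(p) + β·R(p)`. -/
theorem stmt7 (m n : ℕ) (hm : 0 < m) (hn : 0 < n)
    (A : Matrix (Fin m) (Fin n) ℝ)
    (s : ℕ) (hs : 1 ≤ s) (δ : ℝ) (hδ : δ ∈ Set.Ioo (0 : ℝ) 1)
    (p : Fin m → Fin n → ℝ)
    (hp0 : ∀ i j, 0 ≤ p i j) (hpsum : ∑ i, ∑ j, p i j = 1)
    (hppos : ∀ i j, A i j ≠ 0 → 0 < p i j)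
    (hσ : 0 < sigmaSq A p) (hR : 0 < Rp A p) :
    (alphaC m n s δ * Real.sqrt (sigmaSq A p) + betaC m n s δ * Rp A p) / Real.sqrt 2
        ≤ eps1 s δ A p ∧
      eps1 s δ A p ≤ alphaC m n s δ * Real.sqrt (sigmaSq A p) + betaC m n s δ * Rp A p :=
  stmt7_general m n hm A s hs δ hδ p hσ hR
end

section
/- Let A be an m×n real matrix all of whose rows are nonzero. Let ρ be a distribution over the rows with ρ_i > 0 and ∑_i ρ_i = 1, and for each row i let q i be a distribution over the columns with ∑_j q i j = 1, q i j ≥ 0, and q i j > 0 whenever A i j ≠ 0. Set p i j = ρ_i · q i j. Then ε₅(p) ≥ max_i [ α·‖A_(i)‖₁/√ρ_i + β·‖A_(i)‖₁/ρ_i ], and equality holds when q i j = |A i j|/‖A_(i)‖₁ for all (i,j). -/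
open Matrix

/-- `ε₅(p) = max_i [ α·√(∑_j (A i j)²/p i j) + β·max_j |A i j|/p i j ]`. -/
noncomputable def eps5 {m n : ℕ} (α β : ℝ) (A : Matrix (Fin m) (Fin n) ℝ)
    (p : Fin m → Fin n → ℝ) : ℝ :=
  ⨆ i, (α * Real.sqrt (∑ j, A i j ^ 2 / p i j) + β * ⨆ j, |A i j| / p i j)

/-!
Write `p i j = ρ i q i j`, so that row `i` of `p` has total mass `ρ i` and charges every column
where `A` does not vanish. Cauchy–Schwarz gives `‖A_(i)‖₁² ≤ ρ i · ∑_j (A i j)² / p i j`, and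
writing `‖A_(i)‖₁ = ∑_j p i j · (|A i j| / p i j)` as a `p`-weighted sum gives
`‖A_(i)‖₁ ≤ ρ i · max_j |A i j| / p i j`. For `q i j = |A i j| / ‖A_(i)‖₁` every nonzero ratio
`|A i j| / p i j` equals `‖A_(i)‖₁ / ρ i`, so both bounds are attained.
-/

theorem abs_div_mul_abs_le_inv {c : ℝ} (hc : 0 ≤ c) (x : ℝ) : |x| / (c * |x|) ≤ c⁻¹ := by
  rcases eq_or_ne x 0 with rfl | hx
  · simpa using hc
  · rw [div_mul_cancel_right₀ (abs_ne_zero.2 hx)]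

theorem betaC_nonneg (m n s : ℕ) {δ : ℝ} (hδ0 : 0 < δ) (hδ1 : δ ≤ 1) : 0 ≤ betaC m n s δ := by
  refine div_nonneg ?_ (by positivity)
  rcases Nat.eq_zero_or_pos (m + n) with h | h
  · simp [show (m : ℝ) + n = 0 by exact_mod_cast h]
  · apply Real.log_nonneg
    rw [le_div_iff₀ hδ0, one_mul]
    exact hδ1.trans (by exact_mod_cast h)

section Weights

variable {ι : Type*} [Fintype ι] {a p : ι → ℝ}

theorem sq_sum_abs_le_sum_mul_sum_sq_div (hp : ∀ j, 0 ≤ p j) (hsupp : ∀ j, a j ≠ 0 → p j ≠ 0) :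
    (∑ j, |a j|) ^ 2 ≤ (∑ j, p j) * ∑ j, a j ^ 2 / p j := by
  refine Finset.sum_sq_le_sum_mul_sum_of_sq_le_mul _ (fun j _ => hp j)
    (fun j _ => div_nonneg (sq_nonneg _) (hp j)) fun j _ => ?_
  rw [sq_abs, mul_div_cancel_of_imp' fun h => by simp [not_imp_not.1 (hsupp j) h]]

theorem sum_abs_le_sum_mul_iSup_abs_div (hp : ∀ j, 0 ≤ p j)
    (hsupp : ∀ j, a j ≠ 0 → p j ≠ 0) :
    ∑ j, |a j| ≤ (∑ j, p j) * ⨆ j, |a j| / p j :=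
  calc ∑ j, |a j| = ∑ j, p j * (|a j| / p j) :=
        Finset.sum_congr rfl fun j _ =>
          (mul_div_cancel_of_imp' fun h => by simp [not_imp_not.1 (hsupp j) h]).symm
    _ ≤ ∑ j, p j * ⨆ j, |a j| / p j :=
        Finset.sum_le_sum fun j _ => mul_le_mul_of_nonneg_left
          (le_ciSup (f := fun j => |a j| / p j) (Set.finite_range _).bddAbove j) (hp j)
    _ = (∑ j, p j) * ⨆ j, |a j| / p j := (Finset.sum_mul _ _ _).symm

theorem mul_sum_abs_div_sqrt_add_le {α β w : ℝ} (hα : 0 ≤ α) (hβ : 0 ≤ β)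
    (hp : ∀ j, 0 ≤ p j) (hsupp : ∀ j, a j ≠ 0 → p j ≠ 0) (hw : ∑ j, p j = w) :
    α * (∑ j, |a j|) / √w + β * (∑ j, |a j|) / w ≤
      α * √(∑ j, a j ^ 2 / p j) + β * ⨆ j, |a j| / p j := by
  have hS : 0 ≤ ∑ j, |a j| := Finset.sum_nonneg fun j _ => abs_nonneg _
  have hw0 : 0 ≤ w := hw ▸ Finset.sum_nonneg fun j _ => hp j
  have hsqrt : (∑ j, |a j|) / √w ≤ √(∑ j, a j ^ 2 / p j) := by
    refine div_le_of_le_mul₀ (Real.sqrt_nonneg _) (Real.sqrt_nonneg _) ?_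
    have hX : 0 ≤ ∑ j, a j ^ 2 / p j :=
      Finset.sum_nonneg fun j _ => div_nonneg (sq_nonneg _) (hp j)
    rw [← Real.sqrt_mul hX, Real.le_sqrt hS (mul_nonneg hX hw0), mul_comm, ← hw]
    exact sq_sum_abs_le_sum_mul_sum_sq_div hp hsupp
  have hsup : (∑ j, |a j|) / w ≤ ⨆ j, |a j| / p j := by
    refine div_le_of_le_mul₀ hw0 (Real.iSup_nonneg fun j => div_nonneg (abs_nonneg _) (hp j)) ?_
    rw [mul_comm, ← hw]
    exact sum_abs_le_sum_mul_iSup_abs_div hp hsupp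
  rw [mul_div_assoc, mul_div_assoc]
  gcongr

theorem sum_sq_div_mul_abs (c : ℝ) : ∑ j, a j ^ 2 / (c * |a j|) = (∑ j, |a j|) / c := by
  rw [Finset.sum_div]
  refine Finset.sum_congr rfl fun j _ => ?_
  rcases eq_or_ne (a j) 0 with h | h
  · simp [h]
  · rw [← sq_abs, sq, mul_div_mul_right _ _ (abs_ne_zero.2 h)]

theorem mul_sqrt_sum_sq_div_add_le {α β ρ : ℝ} (hβ : 0 ≤ β) (hρ : 0 ≤ ρ) :
    α * √(∑ j, a j ^ 2 / (ρ * (|a j| / ∑ j', |a j'|))) +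
        β * ⨆ j, |a j| / (ρ * (|a j| / ∑ j', |a j'|)) ≤
      α * (∑ j, |a j|) / √ρ + β * (∑ j, |a j|) / ρ := by
  have hS : 0 ≤ ∑ j, |a j| := Finset.sum_nonneg fun j _ => abs_nonneg _
  simp only [← mul_comm_div]
  rw [sum_sq_div_mul_abs, div_div_eq_mul_div, ← sq, Real.sqrt_div (sq_nonneg _), Real.sqrt_sq hS,
    mul_div_assoc, mul_div_assoc]
  gcongr
  refine Real.iSup_le (fun j => ?_) (div_nonneg hS hρ)
  exact (abs_div_mul_abs_le_inv (div_nonneg hρ hS) _).trans_eq (inv_div _ _)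

end Weights

theorem stmt9_general (m n : ℕ)
    (A : Matrix (Fin m) (Fin n) ℝ)
    (s : ℕ) (δ : ℝ) (hδ : δ ∈ Set.Ioo (0 : ℝ) 1)
    (ρ : Fin m → ℝ) (hρ : ∀ i, 0 < ρ i)
    (q : Fin m → Fin n → ℝ) (hq0 : ∀ i j, 0 ≤ q i j)
    (hqsum : ∀ i, ∑ j, q i j = 1) (hqpos : ∀ i j, A i j ≠ 0 → 0 < q i j) :
    (⨆ i, (alphaC m n s δ * (∑ j, |A i j|) / Real.sqrt (ρ i) +
        betaC m n s δ * (∑ j, |A i j|) / ρ i))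
      ≤ eps5 (alphaC m n s δ) (betaC m n s δ) A (fun i j => ρ i * q i j) ∧
    ((∀ i j, q i j = |A i j| / ∑ j', |A i j'|) →
      eps5 (alphaC m n s δ) (betaC m n s δ) A (fun i j => ρ i * q i j) =
        ⨆ i, (alphaC m n s δ * (∑ j, |A i j|) / Real.sqrt (ρ i) +
          betaC m n s δ * (∑ j, |A i j|) / ρ i)) := by
  have hβ := betaC_nonneg m n s hδ.1 hδ.2.le
  refine ⟨?lower, fun hq => le_antisymm ?_ ?lower⟩
  case lower =>
    exact ciSup_mono (Set.finite_range _).bddAbove fun i =>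
      mul_sum_abs_div_sqrt_add_le (Real.sqrt_nonneg _) hβ
        (fun j => mul_nonneg (hρ i).le (hq0 i j))
        (fun j hj => (mul_pos (hρ i) (hqpos i j hj)).ne')
        (by rw [← Finset.mul_sum, hqsum i, mul_one])
  obtain rfl : q = fun i j => |A i j| / ∑ j', |A i j'| := funext₂ hq
  exact ciSup_mono (Set.finite_range _).bddAbove fun i => mul_sqrt_sum_sq_div_add_le hβ (hρ i).le

/-- For `p i j = ρ_i · q i j` with `ρ` a positive row distribution and `q i` a distribution on
each row, `ε₅(p) ≥ max_i [ α·‖A_(i)‖₁/√ρ_i + β·‖A_(i)‖₁/ρ_i ]`, and equality holds when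
`q i j = |A i j|/‖A_(i)‖₁`. -/
theorem stmt9 (m n : ℕ) (hm : 0 < m) (hn : 0 < n)
    (A : Matrix (Fin m) (Fin n) ℝ) (hrows : ∀ i, ∃ j, A i j ≠ 0)
    (s : ℕ) (hs : 1 ≤ s) (δ : ℝ) (hδ : δ ∈ Set.Ioo (0 : ℝ) 1)
    (ρ : Fin m → ℝ) (hρ : ∀ i, 0 < ρ i) (hρsum : ∑ i, ρ i = 1)
    (q : Fin m → Fin n → ℝ) (hq0 : ∀ i j, 0 ≤ q i j)
    (hqsum : ∀ i, ∑ j, q i j = 1) (hqpos : ∀ i j, A i j ≠ 0 → 0 < q i j) :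
    (⨆ i, (alphaC m n s δ * (∑ j, |A i j|) / Real.sqrt (ρ i) +
        betaC m n s δ * (∑ j, |A i j|) / ρ i))
      ≤ eps5 (alphaC m n s δ) (betaC m n s δ) A (fun i j => ρ i * q i j) ∧
    ((∀ i j, q i j = |A i j| / ∑ j', |A i j'|) →
      eps5 (alphaC m n s δ) (betaC m n s δ) A (fun i j => ρ i * q i j) =
        ⨆ i, (alphaC m n s δ * (∑ j, |A i j|) / Real.sqrt (ρ i) +
          betaC m n s δ * (∑ j, |A i j|) / ρ i)) :=
  stmt9_general m n A s δ hδ ρ hρ q hq0 hqsum hqpos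
end

section
/- Let m ≥ 1, let z_1, …, z_m > 0, and let α > 0 and β > 0. Then the function ζ ↦ ∑_{i=1}^m ρ_i(ζ) is continuous and strictly decreasing on (0, ∞), and there is a unique ζ₁ > 0 such that ∑_{i=1}^m ρ_i(ζ₁) = 1. -/
/-! Both summands inside the square defining `ρ_i(ζ)` are nonnegative and decrease in `ζ`, the
second one strictly, so `∑ ρ_i` is strictly decreasing. The sum tends to `0` as `ζ → ∞`, while
`ρ_i(ζ) ≥ β z_i / ζ` makes it at least `1` at `ζ = β z_i`; the intermediate value theorem
gives a root, unique by strict monotonicity. -/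

/-- `ρ_i(ζ) = ( α z_i/(2ζ) + √( (α z_i/(2ζ))² + β z_i/ζ ) )²`. -/
noncomputable def rhoFun (α β z ζ : ℝ) : ℝ :=
  (α * z / (2 * ζ) + Real.sqrt ((α * z / (2 * ζ)) ^ 2 + β * z / ζ)) ^ 2

open Filter Set Topology

section Rho

variable {α β z : ℝ}

lemma rhoFun_nonneg (α β z ζ : ℝ) : 0 ≤ rhoFun α β z ζ := sq_nonneg _

lemma div_le_rhoFun (hα : 0 ≤ α) (hβ : 0 ≤ β) (hz : 0 ≤ z) {ζ : ℝ} (hζ : 0 ≤ ζ) :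
    β * z / ζ ≤ rhoFun α β z ζ := by
  have hu : 0 ≤ α * z / (2 * ζ) := by positivity
  have hrad : 0 ≤ (α * z / (2 * ζ)) ^ 2 + β * z / ζ := by positivity
  calc β * z / ζ ≤ (α * z / (2 * ζ)) ^ 2 + β * z / ζ := by nlinarith
    _ = Real.sqrt ((α * z / (2 * ζ)) ^ 2 + β * z / ζ) ^ 2 := (Real.sq_sqrt hrad).symm
    _ ≤ rhoFun α β z ζ := by unfold rhoFun; gcongr; linarith

lemma rhoFun_strictAntiOn (hα : 0 ≤ α) (hβ : 0 < β) (hz : 0 < z) :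
    StrictAntiOn (rhoFun α β z) (Ioi 0) := by
  intro a (ha : 0 < a) b (hb : 0 < b) hab
  have hu : α * z / (2 * b) ≤ α * z / (2 * a) := by gcongr
  have hv : β * z / b < β * z / a := by gcongr
  have hs : Real.sqrt ((α * z / (2 * b)) ^ 2 + β * z / b)
      < Real.sqrt ((α * z / (2 * a)) ^ 2 + β * z / a) :=
    Real.sqrt_lt_sqrt (by positivity)
      (add_lt_add_of_le_of_lt (pow_le_pow_left₀ (by positivity) hu 2) hv)
  exact pow_lt_pow_left₀ (add_lt_add_of_le_of_lt hu hs) (by positivity) two_ne_zero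

lemma continuousOn_rhoFun (α β z : ℝ) : ContinuousOn (rhoFun α β z) (Ioi 0) := by
  have hne : ∀ ζ ∈ Ioi (0 : ℝ), ζ ≠ 0 := fun ζ hζ => ne_of_gt hζ
  have hu : ContinuousOn (fun ζ : ℝ => α * z / (2 * ζ)) (Ioi 0) :=
    continuousOn_const.div (continuousOn_const.mul continuousOn_id)
      fun ζ hζ => mul_ne_zero two_ne_zero (hne ζ hζ)
  have hv : ContinuousOn (fun ζ : ℝ => β * z / ζ) (Ioi 0) :=
    continuousOn_const.div continuousOn_id hne
  exact (hu.add ((hu.pow 2).add hv).sqrt).pow 2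

lemma tendsto_rhoFun_atTop (α β z : ℝ) : Tendsto (rhoFun α β z) atTop (𝓝 0) := by
  have hu : Tendsto (fun ζ : ℝ => α * z / (2 * ζ)) atTop (𝓝 0) :=
    tendsto_const_nhds.div_atTop (tendsto_id.const_mul_atTop two_pos)
  have hv : Tendsto (fun ζ : ℝ => β * z / ζ) atTop (𝓝 0) :=
    tendsto_const_nhds.div_atTop tendsto_id
  change Tendsto (fun ζ => rhoFun α β z ζ) atTop (𝓝 0)
  simpa [rhoFun] using (hu.add ((hu.pow 2).add hv).sqrt).pow 2

end Rho

lemma existsUnique_eq_of_strictAntiOn_Ioi {f : ℝ → ℝ} {p c l a : ℝ}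
    (hcont : ContinuousOn f (Ioi p)) (hanti : StrictAntiOn f (Ioi p))
    (ha : p < a) (hfa : c ≤ f a) (hlim : Tendsto f atTop (𝓝 l)) (hl : l < c) :
    ∃! x, p < x ∧ f x = c := by
  obtain ⟨b, hab, hfb⟩ :=
    ((eventually_gt_atTop a).and (hlim.eventually_lt_const hl)).exists
  obtain ⟨x, hx, hfx⟩ := intermediate_value_Icc' hab.le
    (hcont.mono fun y hy => ha.trans_le hy.1) ⟨hfb.le, hfa⟩
  have hpx : p < x := ha.trans_le hx.1
  exact ⟨x, ⟨hpx, hfx⟩, fun y ⟨hpy, hfy⟩ => hanti.injOn hpy hpx (hfy.trans hfx.symm)⟩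

/-- For `m ≥ 1`, positive `z_i` and `α, β > 0`, the function `ζ ↦ ∑_i ρ_i(ζ)` is continuous
and strictly decreasing on `(0, ∞)`, and there is a unique `ζ₁ > 0` with `∑_i ρ_i(ζ₁) = 1`. -/
theorem stmt11 (m : ℕ) (hm : 0 < m) (z : Fin m → ℝ) (hz : ∀ i, 0 < z i)
    (α β : ℝ) (hα : 0 < α) (hβ : 0 < β) :
    ContinuousOn (fun ζ => ∑ i, rhoFun α β (z i) ζ) (Set.Ioi 0) ∧
    StrictAntiOn (fun ζ => ∑ i, rhoFun α β (z i) ζ) (Set.Ioi 0) ∧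
    (∃! ζ₁ : ℝ, 0 < ζ₁ ∧ ∑ i, rhoFun α β (z i) ζ₁ = 1) := by
  let i₀ : Fin m := ⟨0, hm⟩
  have hcont : ContinuousOn (fun ζ => ∑ i, rhoFun α β (z i) ζ) (Ioi 0) :=
    continuousOn_finsetSum _ fun i _ => continuousOn_rhoFun α β (z i)
  have hanti : StrictAntiOn (fun ζ => ∑ i, rhoFun α β (z i) ζ) (Ioi 0) :=
    fun a ha b hb hab => Finset.sum_lt_sum_of_nonempty ⟨i₀, Finset.mem_univ _⟩
      fun i _ => rhoFun_strictAntiOn hα.le hβ (hz i) ha hb hab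
  have hlim : Tendsto (fun ζ => ∑ i, rhoFun α β (z i) ζ) atTop (𝓝 0) := by
    simpa using tendsto_finsetSum Finset.univ fun i _ => tendsto_rhoFun_atTop α β (z i)
  have hpos : 0 < β * z i₀ := mul_pos hβ (hz i₀)
  have hone : 1 ≤ ∑ i, rhoFun α β (z i) (β * z i₀) :=
    calc (1 : ℝ) = β * z i₀ / (β * z i₀) := (div_self hpos.ne').symm
      _ ≤ rhoFun α β (z i₀) (β * z i₀) := div_le_rhoFun hα.le hβ.le (hz i₀).le hpos.le
      _ ≤ ∑ i, rhoFun α β (z i) (β * z i₀) :=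
        Finset.single_le_sum (fun i _ => rhoFun_nonneg α β (z i) _) (Finset.mem_univ i₀)
  exact ⟨hcont, hanti, existsUnique_eq_of_strictAntiOn_Ioi hcont hanti hpos hone hlim one_pos⟩
end

section
/- Let A be an m×n real matrix all of whose rows are nonzero, and let p* be the algorithm's distribution. Then ε₅(p*) = ζ₁, and for every sampling distribution q on the entries of A, ε₅(p*) ≤ ε₅(q); that is, p* minimizes ε₅ and its minimum value is ζ₁. -/
open Matrix

/-- The algorithm's distribution: `p* i j = ρ_i(ζ₁) · |A i j| / ‖A_(i)‖₁`
with `z_i = ‖A_(i)‖₁`. -/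
noncomputable def pstar {m n : ℕ} (α β : ℝ) (A : Matrix (Fin m) (Fin n) ℝ)
    (ζ₁ : ℝ) : Fin m → Fin n → ℝ :=
  fun i j => rhoFun α β (∑ j', |A i j'|) ζ₁ * |A i j| / ∑ j', |A i j'|

/-!
A row of `ℓ₁`-norm `z` that receives total sampling mass `t` contributes at least
`α z / √t + β z / t` to `ε₅` (Cauchy–Schwarz for the first term, "max ≥ weighted average" for
the second), with equality when the row is sampled proportionally to `|A i j|`. This bound
decreases in `t`, and `ρ_i(ζ)` is exactly the mass at which it equals `ζ`. So every row of `p*`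
sits at level `ζ₁`, while any other distribution `q`, whose row masses also sum to one, gives
some row at most the mass `ρ_i(ζ₁)`, and that row alone forces `ε₅(q) ≥ ζ₁`.
-/

section RowError

variable {ι : Type*} [Fintype ι]

noncomputable def rowError (α β : ℝ) (a q : ι → ℝ) : ℝ :=
  α * √(∑ j, a j ^ 2 / q j) + β * ⨆ j, |a j| / q j

lemma eps5_eq_iSup_rowError {m n : ℕ} (α β : ℝ) (A : Matrix (Fin m) (Fin n) ℝ)
    (p : Fin m → Fin n → ℝ) : eps5 α β A p = ⨆ i, rowError α β (A i) (p i) := rfl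

lemma sum_abs_pos_of_exists_ne_zero {a : ι → ℝ} (ha : ∃ j, a j ≠ 0) :
    0 < ∑ j, |a j| := by
  obtain ⟨j, hj⟩ := ha
  exact Finset.sum_pos' (fun j _ => abs_nonneg _) ⟨j, Finset.mem_univ _, abs_pos.mpr hj⟩

noncomputable def minRowError (α β z t : ℝ) : ℝ :=
  α * z / √t + β * z / t

lemma rhoFun_pos {α β z ζ : ℝ} (hα : 0 < α) (hβ : 0 ≤ β) (hz : 0 < z) (hζ : 0 < ζ) :
    0 < rhoFun α β z ζ := by
  unfold rhoFun
  positivity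

lemma minRowError_rhoFun {α β z ζ : ℝ} (hα : 0 < α) (hβ : 0 ≤ β) (hz : 0 < z) (hζ : 0 < ζ) :
    minRowError α β z (rhoFun α β z ζ) = ζ := by
  set a := α * z / (2 * ζ) with ha
  set b := β * z / ζ with hb
  set r := a + √(a ^ 2 + b) with hr
  have hr_pos : 0 < r := by positivity
  -- `r = √ρ` is the positive root of `ζ r² = α z r + β z`.
  have hr_root : ζ * r ^ 2 = α * z * r + β * z := by
    have hsq : √(a ^ 2 + b) ^ 2 = a ^ 2 + b := Real.sq_sqrt (by positivity)
    have : r ^ 2 = 2 * a * r + b := by rw [hr]; linear_combination hsq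
    rw [this, ha, hb]; field_simp
  have hρ : rhoFun α β z ζ = r ^ 2 := rfl
  rw [minRowError, hρ, Real.sqrt_sq hr_pos.le]
  field_simp
  linear_combination -hr_root

lemma minRowError_antitoneOn {α β z : ℝ} (hα : 0 ≤ α) (hβ : 0 ≤ β) (hz : 0 ≤ z) :
    AntitoneOn (minRowError α β z) (Set.Ioi 0) := by
  intro s hs t _ hst
  have : 0 < √s := Real.sqrt_pos.mpr hs
  unfold minRowError
  gcongr

lemma sq_sum_abs_div_le_sum_sq_div {a q : ι → ℝ} (hq0 : ∀ j, 0 ≤ q j)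
    (hq : ∀ j, a j ≠ 0 → 0 < q j) :
    (∑ j, |a j|) ^ 2 / ∑ j, q j ≤ ∑ j, a j ^ 2 / q j := by
  have hterm : ∀ j, |a j| ^ 2 ≤ a j ^ 2 / q j * q j := fun j => by
    by_cases h : a j = 0
    · simp [h]
    · rw [div_mul_cancel₀ _ (hq j h).ne', sq_abs]
  refine div_le_of_le_mul₀ (Finset.sum_nonneg fun j _ => hq0 j)
    (Finset.sum_nonneg fun j _ => div_nonneg (sq_nonneg _) (hq0 j)) ?_
  exact Finset.sum_sq_le_sum_mul_sum_of_sq_le_mul _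
    (fun j _ => div_nonneg (sq_nonneg _) (hq0 j)) (fun j _ => hq0 j) (fun j _ => hterm j)

lemma sum_abs_div_le_iSup {a q : ι → ℝ} (hq0 : ∀ j, 0 ≤ q j)
    (hq : ∀ j, a j ≠ 0 → 0 < q j) :
    (∑ j, |a j|) / ∑ j, q j ≤ ⨆ j, |a j| / q j := by
  have hM : 0 ≤ ⨆ j, |a j| / q j :=
    Real.iSup_nonneg fun j => div_nonneg (abs_nonneg _) (hq0 j)
  have hterm : ∀ j, |a j| ≤ (⨆ j, |a j| / q j) * q j := fun j => by
    by_cases h : a j = 0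
    · simpa [h] using mul_nonneg hM (hq0 j)
    · rw [← div_le_iff₀ (hq j h)]
      exact le_ciSup (Finite.bddAbove_range fun j => |a j| / q j) j
  refine div_le_of_le_mul₀ (Finset.sum_nonneg fun j _ => hq0 j) hM ?_
  rw [Finset.mul_sum]
  exact Finset.sum_le_sum fun j _ => hterm j

lemma minRowError_le_rowError {α β : ℝ} (hα : 0 ≤ α) (hβ : 0 ≤ β) {a q : ι → ℝ}
    (hq0 : ∀ j, 0 ≤ q j) (hq : ∀ j, a j ≠ 0 → 0 < q j) :
    minRowError α β (∑ j, |a j|) (∑ j, q j) ≤ rowError α β a q := by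
  have hz : 0 ≤ ∑ j, |a j| := Finset.sum_nonneg fun j _ => abs_nonneg _
  have hsqrt : (∑ j, |a j|) / √(∑ j, q j) = √((∑ j, |a j|) ^ 2 / ∑ j, q j) := by
    rw [Real.sqrt_div' _ (Finset.sum_nonneg fun j _ => hq0 j), Real.sqrt_sq hz]
  rw [minRowError, rowError, mul_div_assoc, mul_div_assoc, hsqrt]
  gcongr
  · exact sq_sum_abs_div_le_sum_sq_div hq0 hq
  · exact sum_abs_div_le_iSup hq0 hq

lemma rowError_proportional {α β ρ : ℝ} (hρ : 0 < ρ) {a : ι → ℝ} (ha : ∃ j, a j ≠ 0) :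
    rowError α β a (fun j => ρ * |a j| / ∑ j', |a j'|) = minRowError α β (∑ j, |a j|) ρ := by
  have hz := sum_abs_pos_of_exists_ne_zero ha
  obtain ⟨j₀, hj₀⟩ := ha
  have : Nonempty ι := ⟨j₀⟩
  set z := ∑ j, |a j|
  have hratio : ∀ j, a j ≠ 0 → |a j| / (ρ * |a j| / z) = z / ρ := fun j h => by
    have := abs_pos.mpr h
    field_simp
  have hsum : ∑ j, a j ^ 2 / (ρ * |a j| / z) = z ^ 2 / ρ := by
    have hterm : ∀ j, a j ^ 2 / (ρ * |a j| / z) = |a j| * (z / ρ) := fun j => by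
      by_cases h : a j = 0
      · simp [h]
      · rw [← sq_abs, sq, mul_div_assoc, hratio j h]
    rw [Finset.sum_congr rfl fun j _ => hterm j, ← Finset.sum_mul]
    ring
  have hsup : ⨆ j, |a j| / (ρ * |a j| / z) = z / ρ := by
    refine le_antisymm (ciSup_le fun j => ?_) ?_
    · by_cases h : a j = 0
      · simpa [h] using div_nonneg hz.le hρ.le
      · exact (hratio j h).le
    · exact (hratio j₀ hj₀).symm.le.trans
        (le_ciSup (Finite.bddAbove_range fun j => |a j| / (ρ * |a j| / z)) j₀)
  rw [rowError, hsum, hsup, minRowError, Real.sqrt_div' _ hρ.le, Real.sqrt_sq hz.le]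
  ring

end RowError

section Eps5

variable {m n : ℕ} {α β ζ : ℝ} {A : Matrix (Fin m) (Fin n) ℝ}

theorem eps5_pstar [Nonempty (Fin m)] (hα : 0 < α) (hβ : 0 ≤ β) (hζ : 0 < ζ)
    (hrows : ∀ i, ∃ j, A i j ≠ 0) : eps5 α β A (pstar α β A ζ) = ζ := by
  have hrow : ∀ i, rowError α β (A i) (pstar α β A ζ i) = ζ := fun i => by
    have hz := sum_abs_pos_of_exists_ne_zero (hrows i)
    exact (rowError_proportional (rhoFun_pos hα hβ hz hζ) (hrows i)).trans
      (minRowError_rhoFun hα hβ hz hζ)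
  simp only [eps5_eq_iSup_rowError, hrow, ciSup_const]

theorem le_eps5_of_sum_rhoFun_eq_one (hα : 0 < α) (hβ : 0 ≤ β) (hζ : 0 < ζ)
    (hrows : ∀ i, ∃ j, A i j ≠ 0) (hρsum : ∑ i, rhoFun α β (∑ j, |A i j|) ζ = 1)
    {q : Fin m → Fin n → ℝ} (hq0 : ∀ i j, 0 ≤ q i j) (hqsum : ∑ i, ∑ j, q i j = 1)
    (hqpos : ∀ i j, A i j ≠ 0 → 0 < q i j) : ζ ≤ eps5 α β A q := by
  obtain ⟨i, -, hi⟩ : ∃ i ∈ Finset.univ, ∑ j, q i j ≤ rhoFun α β (∑ j, |A i j|) ζ :=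
    Finset.exists_le_of_sum_le (Finset.nonempty_of_sum_ne_zero (by rw [hqsum]; exact one_ne_zero))
      (by rw [hqsum, hρsum])
  have hz := sum_abs_pos_of_exists_ne_zero (hrows i)
  obtain ⟨j, hj⟩ := hrows i
  have ht : 0 < ∑ j, q i j :=
    Finset.sum_pos' (fun j _ => hq0 i j) ⟨j, Finset.mem_univ _, hqpos i j hj⟩
  calc ζ = minRowError α β (∑ j, |A i j|) (rhoFun α β (∑ j, |A i j|) ζ) :=
        (minRowError_rhoFun hα hβ hz hζ).symm
    _ ≤ minRowError α β (∑ j, |A i j|) (∑ j, q i j) :=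
        minRowError_antitoneOn hα.le hβ hz.le ht (rhoFun_pos hα hβ hz hζ) hi
    _ ≤ rowError α β (A i) (q i) := minRowError_le_rowError hα.le hβ (hq0 i) (hqpos i)
    _ ≤ eps5 α β A q := le_ciSup (Finite.bddAbove_range fun i => rowError α β (A i) (q i)) i

end Eps5

theorem stmt12_general (m n : ℕ) (hm : 0 < m)
    (A : Matrix (Fin m) (Fin n) ℝ) (hrows : ∀ i, ∃ j, A i j ≠ 0)
    (s : ℕ) (hs : 1 ≤ s) (δ : ℝ) (hδ : δ ∈ Set.Ioo (0 : ℝ) 1)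
    (ζ₁ : ℝ) (hζ : 0 < ζ₁)
    (hρsum : ∑ i, rhoFun (alphaC m n s δ) (betaC m n s δ) (∑ j, |A i j|) ζ₁ = 1) :
    eps5 (alphaC m n s δ) (betaC m n s δ) A
        (pstar (alphaC m n s δ) (betaC m n s δ) A ζ₁) = ζ₁ ∧
    ∀ q : Fin m → Fin n → ℝ, (∀ i j, 0 ≤ q i j) → (∑ i, ∑ j, q i j) = 1 →
      (∀ i j, A i j ≠ 0 → 0 < q i j) →
      eps5 (alphaC m n s δ) (betaC m n s δ) A
          (pstar (alphaC m n s δ) (betaC m n s δ) A ζ₁) ≤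
        eps5 (alphaC m n s δ) (betaC m n s δ) A q := by
  have hlog : 0 < Real.log ((m + n : ℝ) / δ) := by
    have : (1 : ℝ) ≤ m := by exact_mod_cast hm
    refine Real.log_pos ((one_lt_div hδ.1).mpr ?_)
    linarith [hδ.2, (n.cast_nonneg : (0 : ℝ) ≤ n)]
  have hα : 0 < alphaC m n s δ := Real.sqrt_pos.mpr (div_pos hlog (by exact_mod_cast hs))
  have hβ : 0 ≤ betaC m n s δ := div_nonneg hlog.le (by positivity)
  have : Nonempty (Fin m) := Fin.pos_iff_nonempty.mp hm
  have hpstar := eps5_pstar hα hβ hζ hrows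
  refine ⟨hpstar, fun q hq0 hqsum hqpos => ?_⟩
  rw [hpstar]
  exact le_eps5_of_sum_rhoFun_eq_one hα hβ hζ hrows hρsum hq0 hqsum hqpos

/-- The algorithm's distribution `p*` satisfies `ε₅(p*) = ζ₁` and minimizes `ε₅` over all
sampling distributions on the entries of `A`. -/
theorem stmt12 (m n : ℕ) (hm : 0 < m) (hn : 0 < n)
    (A : Matrix (Fin m) (Fin n) ℝ) (hrows : ∀ i, ∃ j, A i j ≠ 0)
    (s : ℕ) (hs : 1 ≤ s) (δ : ℝ) (hδ : δ ∈ Set.Ioo (0 : ℝ) 1)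
    (ζ₁ : ℝ) (hζ : 0 < ζ₁)
    (hρsum : ∑ i, rhoFun (alphaC m n s δ) (betaC m n s δ) (∑ j, |A i j|) ζ₁ = 1) :
    eps5 (alphaC m n s δ) (betaC m n s δ) A
        (pstar (alphaC m n s δ) (betaC m n s δ) A ζ₁) = ζ₁ ∧
    ∀ q : Fin m → Fin n → ℝ, (∀ i j, 0 ≤ q i j) → (∑ i, ∑ j, q i j) = 1 →
      (∀ i j, A i j ≠ 0 → 0 < q i j) →
      eps5 (alphaC m n s δ) (betaC m n s δ) A
          (pstar (alphaC m n s δ) (betaC m n s δ) A ζ₁) ≤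
        eps5 (alphaC m n s δ) (betaC m n s δ) A q :=
  stmt12_general m n hm A hrows s hs δ hδ ζ₁ hζ hρsum
end
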